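/- Let c < b < a < 0 and let q(z) = z² + q_1 z + q_0 with q_1 = -(a+b+c)/2 and q_0 = -(J_2 + q_1 J_1)/J_0, where J_k = -∫_c^b z^k dz/√|p(z)| and p(z) = (z-a)(z-b)(z-c). Then q(b) ≤ -(1/3)(a-b)(b-c) < 0 and q(c) ≥ (1/3)(a-c)(b-c) > 0. -/

import Mathlib

open MeasureTheory Set

lemma rpow_half_eq {t : ℝ} (ht : 0 ≤ t) : t ^ (-(1/2) : ℝ) = 1 / Real.sqrt t := by
  rw [Real.rpow_neg ht, Real.sqrt_eq_rpow]
  exact (one_div _).symm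

lemma aux_int {a b c : ℝ} (hcb : c < b) (hba : b < a) (k : ℕ) :
    IntervalIntegrable (fun z => z ^ k / Real.sqrt |(z - a) * (z - b) * (z - c)|) volume c b := by
  rw [intervalIntegrable_iff_integrableOn_Ioc_of_le hcb.le]
  set M : ℝ := (|b| + |c|) ^ k with hMdef
  have hab : (0:ℝ) < a - b := by linarith
  have hbc : (0:ℝ) < b - c := by linarith
  set K : ℝ := M / Real.sqrt ((a - b) * (b - c) / 2) with hKdef
  have hM : 0 ≤ M := by positivity
  have hKpos : 0 ≤ K := by positivity
  have h1 : IntegrableOn (fun z => (z - c) ^ (-(1/2) : ℝ)) (Ioc c b) := by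
    have h := (intervalIntegral.intervalIntegrable_rpow' (a := 0) (b := b - c)
      (by norm_num : (-1:ℝ) < -(1/2))).comp_sub_right c
    rw [zero_add, sub_add_cancel] at h
    exact (intervalIntegrable_iff_integrableOn_Ioc_of_le hcb.le).mp h
  have h2 : IntegrableOn (fun z => (b - z) ^ (-(1/2) : ℝ)) (Ioc c b) := by
    have h := (intervalIntegral.intervalIntegrable_rpow' (a := 0) (b := b - c)
      (by norm_num : (-1:ℝ) < -(1/2))).comp_sub_left b
    rw [sub_zero, sub_sub_cancel] at h
    exact (intervalIntegrable_iff_integrableOn_Ioc_of_le hcb.le).mp h.symm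
  have hG : IntegrableOn
      (fun z => K * ((b - z) ^ (-(1/2):ℝ) + (z - c) ^ (-(1/2):ℝ))) (Ioc c b) :=
    (h2.add h1).const_mul K
  refine Integrable.mono hG ?_ ?_
  · refine Measurable.aestronglyMeasurable ?_
    exact (measurable_id.pow_const k).div
      ((Real.continuous_sqrt.comp (continuous_abs.comp (by fun_prop))).measurable)
  · rw [ae_restrict_iff' measurableSet_Ioc]
    filter_upwards with z hz
    obtain ⟨hzc, hzb⟩ := hz
    have hx0 : 0 ≤ b - z := by linarith
    have hy0 : 0 < z - c := by linarith
    have hP : |(z - a) * (z - b) * (z - c)| = (a - z) * ((b - z) * (z - c)) := by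
      rw [show (z - a) * (z - b) * (z - c) = (a - z) * ((b - z) * (z - c)) by ring,
        abs_of_nonneg (mul_nonneg (by linarith) (mul_nonneg hx0 hy0.le))]
    have hGz : 0 ≤ K * ((b - z) ^ (-(1/2):ℝ) + (z - c) ^ (-(1/2):ℝ)) := by
      have := Real.rpow_nonneg hx0 (-(1/2))
      have := Real.rpow_nonneg hy0.le (-(1/2))
      positivity
    rw [Real.norm_eq_abs, Real.norm_eq_abs, abs_of_nonneg hGz, abs_div,
      abs_of_nonneg (Real.sqrt_nonneg _), abs_pow]
    have hzk : |z| ^ k ≤ M := by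
      apply pow_le_pow_left₀ (abs_nonneg _)
      rcases abs_cases z with h | h <;> rcases abs_cases b with hb | hb <;>
        rcases abs_cases c with hc | hc <;> linarith
    rw [hP]
    rcases eq_or_lt_of_le hx0 with hx | hx
    · rw [show (a - z) * ((b - z) * (z - c)) = 0 by rw [← hx]; ring, Real.sqrt_zero, div_zero]
      exact hGz
    · have hzk' : 0 ≤ |z| ^ k := pow_nonneg (abs_nonneg _) k
      rcases le_total (b - z) (z - c) with hcase | hcase
      · have hy2 : (b - c) / 2 ≤ z - c := by linarith
        have haz : a - b ≤ a - z := by linarith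
        have key : (a - b) * (b - c) / 2 * (b - z) ≤ (a - z) * ((b - z) * (z - c)) := by
          nlinarith [mul_le_mul_of_nonneg_left
            (mul_le_mul haz hy2 (by positivity) (by linarith)) hx.le]
        have s2 : 0 < Real.sqrt ((a - b) * (b - c) / 2 * (b - z)) :=
          Real.sqrt_pos.mpr (by positivity)
        have t1 : |z| ^ k / Real.sqrt ((a - z) * ((b - z) * (z - c)))
            ≤ M / Real.sqrt ((a - b) * (b - c) / 2 * (b - z)) :=
          div_le_div₀ hM hzk s2 (Real.sqrt_le_sqrt key)
        have t2 : M / Real.sqrt ((a - b) * (b - c) / 2 * (b - z))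
            = K * (b - z) ^ (-(1/2) : ℝ) := by
          rw [Real.sqrt_mul (by positivity), rpow_half_eq hx0, mul_one_div,
            div_mul_eq_div_div, hKdef]
        nlinarith [mul_nonneg hKpos (Real.rpow_nonneg hy0.le (-(1/2 : ℝ)))]
      · have hy2 : (b - c) / 2 ≤ b - z := by linarith
        have haz : a - b ≤ a - z := by linarith
        have key : (a - b) * (b - c) / 2 * (z - c) ≤ (a - z) * ((b - z) * (z - c)) := by
          nlinarith [mul_le_mul_of_nonneg_left
            (mul_le_mul haz hy2 (by positivity) (by linarith)) hy0.le]
        have s2 : 0 < Real.sqrt ((a - b) * (b - c) / 2 * (z - c)) :=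
          Real.sqrt_pos.mpr (by positivity)
        have t1 : |z| ^ k / Real.sqrt ((a - z) * ((b - z) * (z - c)))
            ≤ M / Real.sqrt ((a - b) * (b - c) / 2 * (z - c)) :=
          div_le_div₀ hM hzk s2 (Real.sqrt_le_sqrt key)
        have t2 : M / Real.sqrt ((a - b) * (b - c) / 2 * (z - c))
            = K * (z - c) ^ (-(1/2) : ℝ) := by
          rw [Real.sqrt_mul (by positivity), rpow_half_eq hy0.le, mul_one_div,
            div_mul_eq_div_div, hKdef]
        nlinarith [mul_nonneg hKpos (Real.rpow_nonneg hx0 (-(1/2 : ℝ)))]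

/-- The elliptic integral `J_k = -∫_c^b z^k dz / √|p(z)|` with
`p(z) = (z-a)(z-b)(z-c)`. -/
noncomputable def Jint (a b c : ℝ) (k : ℕ) : ℝ :=
  -∫ z in c..b, z ^ k / Real.sqrt |(z - a) * (z - b) * (z - c)|

theorem stmt_9 (a b c : ℝ) (hcb : c < b) (hba : b < a) (ha : a < 0)
    (q₁ q₀ : ℝ) (hq₁ : q₁ = -(a + b + c) / 2)
    (hq₀ : q₀ = -(Jint a b c 2 + q₁ * Jint a b c 1) / Jint a b c 0)
    (q : ℝ → ℝ) (hq : ∀ z, q z = z ^ 2 + q₁ * z + q₀) :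
    (q b ≤ -(1/3) * (a - b) * (b - c) ∧ -(1/3) * (a - b) * (b - c) < 0) ∧
    (q c ≥ (1/3) * (a - c) * (b - c) ∧ 0 < (1/3) * (a - c) * (b - c)) := by
  have hI : ∀ k : ℕ, IntervalIntegrable
      (fun z => z ^ k / Real.sqrt |(z - a) * (z - b) * (z - c)|) volume c b :=
    fun k => aux_int hcb hba k
  set I0 : ℝ := ∫ z in c..b, z ^ 0 / Real.sqrt |(z - a) * (z - b) * (z - c)| with hI0def
  set I1 : ℝ := ∫ z in c..b, z ^ 1 / Real.sqrt |(z - a) * (z - b) * (z - c)| with hI1def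
  set I2 : ℝ := ∫ z in c..b, z ^ 2 / Real.sqrt |(z - a) * (z - b) * (z - c)| with hI2def
  -- positivity of I0
  have hI0pos : 0 < I0 := by
    refine intervalIntegral.intervalIntegral_pos_of_pos_on (hI 0) ?_ hcb
    intro z hz
    have habs : 0 < |(z - a) * (z - b) * (z - c)| := by
      refine abs_pos.mpr (mul_ne_zero (mul_ne_zero ?_ ?_) ?_) <;>
        · intro h; rw [sub_eq_zero] at h; rcases hz with ⟨h1, h2⟩; subst h; linarith
    rw [pow_zero]
    exact div_pos one_pos (Real.sqrt_pos.mpr habs)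
  -- monotonicity bounds on I1
  have hm1 : c * I0 ≤ I1 := by
    rw [hI0def, hI1def, ← intervalIntegral.integral_const_mul]
    apply intervalIntegral.integral_mono_on hcb.le ((hI 0).const_mul c) (hI 1)
    intro z hz
    rw [pow_zero, pow_one, mul_one_div, div_eq_mul_inv, div_eq_mul_inv]
    exact mul_le_mul_of_nonneg_right hz.1 (inv_nonneg.mpr (Real.sqrt_nonneg _))
  have hm2 : I1 ≤ b * I0 := by
    rw [hI0def, hI1def, ← intervalIntegral.integral_const_mul]
    apply intervalIntegral.integral_mono_on hcb.le (hI 1) ((hI 0).const_mul b)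
    intro z hz
    rw [pow_zero, pow_one, mul_one_div, div_eq_mul_inv, div_eq_mul_inv]
    exact mul_le_mul_of_nonneg_right hz.2 (inv_nonneg.mpr (Real.sqrt_nonneg _))
  -- FTC relation
  have hrel : 3 * I2 - 2 * (a + b + c) * I1 + (a * b + b * c + c * a) * I0 = 0 := by
    have hg'eq : (fun z => (3 * z ^ 2 - 2 * (a + b + c) * z + (a * b + b * c + c * a)) /
          Real.sqrt |(z - a) * (z - b) * (z - c)|)
        = fun z => 3 * (z ^ 2 / Real.sqrt |(z - a) * (z - b) * (z - c)|)
          + (-(2 * (a + b + c))) * (z ^ 1 / Real.sqrt |(z - a) * (z - b) * (z - c)|)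
          + (a * b + b * c + c * a) * (z ^ 0 / Real.sqrt |(z - a) * (z - b) * (z - c)|) := by
      funext z; rw [pow_zero, pow_one]; ring
    have hint : IntervalIntegrable (fun z =>
        (3 * z ^ 2 - 2 * (a + b + c) * z + (a * b + b * c + c * a)) /
          Real.sqrt |(z - a) * (z - b) * (z - c)|) volume c b := by
      rw [hg'eq]
      exact (((hI 2).const_mul 3).add ((hI 1).const_mul _)).add ((hI 0).const_mul _)
    have hftc : (∫ z in c..b, (3 * z ^ 2 - 2 * (a + b + c) * z + (a * b + b * c + c * a)) /
        Real.sqrt |(z - a) * (z - b) * (z - c)|) = 0 := by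
      have h := intervalIntegral.integral_eq_sub_of_hasDeriv_right_of_le hcb.le
        (f := fun z => 2 * Real.sqrt ((z - a) * (z - b) * (z - c)))
        (f' := fun z => (3 * z ^ 2 - 2 * (a + b + c) * z + (a * b + b * c + c * a)) /
          Real.sqrt |(z - a) * (z - b) * (z - c)|)
        ?_ ?_ hint
      · rw [h]; simp
      · exact (continuous_const.mul (Real.continuous_sqrt.comp (by fun_prop))).continuousOn
      · intro x hx
        have hP : 0 < (x - a) * (x - b) * (x - c) := by
          rcases hx with ⟨h1, h2⟩
          have := mul_pos (mul_pos (by linarith : (0:ℝ) < a - x) (by linarith : (0:ℝ) < b - x))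
            (by linarith : (0:ℝ) < x - c)
          nlinarith
        have hpoly : HasDerivAt (fun z => (z - a) * (z - b) * (z - c))
            (3 * x ^ 2 - 2 * (a + b + c) * x + (a * b + b * c + c * a)) x := by
          have h := (((hasDerivAt_id x).sub_const a).mul ((hasDerivAt_id x).sub_const b)).mul
            ((hasDerivAt_id x).sub_const c)
          refine h.congr_deriv ?_; simp only [id_eq, Pi.mul_apply]; ring
        have hd : HasDerivAt (fun z => 2 * Real.sqrt ((z - a) * (z - b) * (z - c)))
            ((3 * x ^ 2 - 2 * (a + b + c) * x + (a * b + b * c + c * a)) /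
              Real.sqrt |(x - a) * (x - b) * (x - c)|) x := by
          have h2 := (hpoly.sqrt hP.ne').const_mul 2
          refine h2.congr_deriv ?_
          rw [abs_of_pos hP]
          have : Real.sqrt ((x - a) * (x - b) * (x - c)) ≠ 0 :=
            (Real.sqrt_pos.mpr hP).ne'
          field_simp
        exact hd.hasDerivWithinAt
    rw [hg'eq] at hftc
    rw [intervalIntegral.integral_add (((hI 2).const_mul 3).add ((hI 1).const_mul _))
        ((hI 0).const_mul _),
      intervalIntegral.integral_add ((hI 2).const_mul 3) ((hI 1).const_mul _),
      intervalIntegral.integral_const_mul, intervalIntegral.integral_const_mul,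
      intervalIntegral.integral_const_mul] at hftc
    rw [← hI0def, ← hI1def, ← hI2def] at hftc
    linarith
  -- q₀ relation
  simp only [Jint] at hq₀
  rw [← hI0def, ← hI1def, ← hI2def] at hq₀
  have hI0ne : I0 ≠ 0 := hI0pos.ne'
  have hq0I : q₀ * I0 = -(I2 + q₁ * I1) := by
    rw [hq₀, div_neg, neg_div, neg_neg, div_mul_cancel₀ _ hI0ne]; ring
  subst hq₁
  have h1b : q b * I0 = (b ^ 2 - (a + b + c) / 2 * b + (a * b + b * c + c * a) / 3) * I0
      - ((a + b + c) / 6) * I1 := by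
    rw [hq b]; linear_combination hq0I - (1/3 : ℝ) * hrel
  have h1c : q c * I0 = (c ^ 2 - (a + b + c) / 2 * c + (a * b + b * c + c * a) / 3) * I0
      - ((a + b + c) / 6) * I1 := by
    rw [hq c]; linear_combination hq0I - (1/3 : ℝ) * hrel
  have hsneg : a + b + c < 0 := by linarith
  have h2b : -((a + b + c) / 6) * I1 ≤ -((a + b + c) / 6) * (b * I0) :=
    mul_le_mul_of_nonneg_left hm2 (by linarith)
  have h2c : -((a + b + c) / 6) * (c * I0) ≤ -((a + b + c) / 6) * I1 :=
    mul_le_mul_of_nonneg_left hm1 (by linarith)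
  have hqb : q b ≤ -(1/3) * (a - b) * (b - c) := by
    have h3 : q b * I0 ≤ (-(1/3) * (a - b) * (b - c)) * I0 := by linarith [h1b, h2b]
    exact le_of_mul_le_mul_right h3 hI0pos
  have hqc : (1/3) * (a - c) * (b - c) ≤ q c := by
    have h3 : ((1/3) * (a - c) * (b - c)) * I0 ≤ q c * I0 := by linarith [h1c, h2c]
    exact le_of_mul_le_mul_right h3 hI0pos
  refine ⟨⟨hqb, ?_⟩, ⟨hqc, ?_⟩⟩
  · nlinarith [mul_pos (sub_pos.2 hba) (sub_pos.2 hcb)]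
  · nlinarith [mul_pos (by linarith : (0:ℝ) < a - c) (sub_pos.2 hcb)]
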